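/- arXiv:cs/0204039 — 7 statements merged into one kernel-verified Lean document; each statement's English description precedes it below -/
import Mathlib

section
/- For any LTS and processes p, q: the set of ready traces of p is included in that of q if and only if every ready trace observation satisfied by p is satisfied by q. -/
def Sim {P A : Type} (tr : P → A → P → Prop) (R : P → P → Prop) : Prop :=
  ∀ p q, R p q → ∀ a p', tr p a p' → ∃ q', tr q a q' ∧ R p' q'

def Bisim {P A : Type} (tr : P → A → P → Prop) (R : P → P → Prop) : Prop :=
  Sim tr R ∧ Sim tr (fun p q => R q p)

def ReadySim {P A : Type} (tr : P → A → P → Prop) (R : P → P → Prop) : Prop :=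
  Sim tr R ∧ ∀ p q, R p q → ∀ a, (∀ p', ¬ tr p a p') → ∀ q', ¬ tr q a q'

def initials {P A : Type} (tr : P → A → P → Prop) (p : P) : Set A :=
  {a | ∃ p', tr p a p'}

inductive Steps {P A : Type} (tr : P → A → P → Prop) : P → List A → P → Prop where
  | nil (p : P) : Steps tr p [] p
  | cons {p : P} {a : A} {p' : P} {l : List A} {q : P} :
      tr p a p' → Steps tr p' l q → Steps tr p (a :: l) q

def Trace {P A : Type} (tr : P → A → P → Prop) (p : P) (ς : List A) : Prop :=
  ∃ q, Steps tr p ς q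

def CompletedTrace {P A : Type} (tr : P → A → P → Prop) (p : P) (ς : List A) : Prop :=
  ∃ q, Steps tr p ς q ∧ initials tr q = ∅

def ReadyPair {P A : Type} (tr : P → A → P → Prop) (p : P) (ς : List A) (X : Set A) : Prop :=
  ∃ q, Steps tr p ς q ∧ initials tr q = X

def FailurePair {P A : Type} (tr : P → A → P → Prop) (p : P) (ς : List A) (X : Set A) : Prop :=
  ∃ q, Steps tr p ς q ∧ initials tr q ∩ X = ∅

inductive ReadyTrace {P A : Type} (tr : P → A → P → Prop) : P → Set A → List (A × Set A) → Prop where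
  | nil (p : P) : ReadyTrace tr p (initials tr p) []
  | cons {p : P} {a : A} {p' : P} {X : Set A} {rest : List (A × Set A)} :
      tr p a p' → ReadyTrace tr p' X rest → ReadyTrace tr p (initials tr p) ((a, X) :: rest)

inductive FailureTrace {P A : Type} (tr : P → A → P → Prop) : P → Set A → List (A × Set A) → Prop where
  | nil {p : P} {X : Set A} : initials tr p ∩ X = ∅ → FailureTrace tr p X []
  | cons {p : P} {a : A} {p' : P} {X Y : Set A} {rest : List (A × Set A)} :
      initials tr p ∩ X = ∅ → tr p a p' → FailureTrace tr p' Y rest →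
      FailureTrace tr p X ((a, Y) :: rest)

inductive Obs (A : Type) : Type 1 where
  | top : Obs A
  | act : A → Obs A → Obs A
  | refuse : A → Obs A
  | conj : {ι : Type} → (ι → Obs A) → Obs A

def Sat {P A : Type} (tr : P → A → P → Prop) : P → Obs A → Prop
  | _, .top => True
  | p, .act a φ => ∃ q, tr p a q ∧ Sat tr q φ
  | p, .refuse a => ∀ q, ¬ tr p a q
  | p, .conj φs => ∀ i, Sat tr p (φs i)

inductive IsT {A : Type} : Obs A → Prop where
  | top : IsT .top
  | act (a : A) {φ : Obs A} : IsT φ → IsT (.act a φ)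

inductive IsCT {A : Type} : Obs A → Prop where
  | top : IsCT .top
  | act (a : A) {φ : Obs A} : IsCT φ → IsCT (.act a φ)
  | refuseAll : IsCT (.conj (fun a : A => Obs.refuse a))

inductive IsF {A : Type} : Obs A → Prop where
  | top : IsF .top
  | act (a : A) {φ : Obs A} : IsF φ → IsF (.act a φ)
  | conj {I : Type} (as : I → A) : IsF (.conj (fun i => Obs.refuse (as i)))

inductive IsR {A : Type} : Obs A → Prop where
  | top : IsR .top
  | act (a : A) {φ : Obs A} : IsR φ → IsR (.act a φ)
  | conj {I J : Type} (as : I → A) (bs : J → A) :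
      IsR (.conj (Sum.elim (fun i => Obs.refuse (as i)) (fun j => Obs.act (bs j) Obs.top)))

inductive IsFT {A : Type} : Obs A → Prop where
  | top : IsFT .top
  | act (a : A) {φ : Obs A} : IsFT φ → IsFT (.act a φ)
  | conj {I : Type} (as : I → A) {φ : Obs A} : IsFT φ →
      IsFT (.conj (Sum.elim (fun i => Obs.refuse (as i)) (fun _ : PUnit => φ)))

inductive IsRT {A : Type} : Obs A → Prop where
  | top : IsRT .top
  | act (a : A) {φ : Obs A} : IsRT φ → IsRT (.act a φ)
  | conj {I J : Type} (as : I → A) (bs : J → A) {φ : Obs A} : IsRT φ →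
      IsRT (.conj (Sum.elim (Sum.elim (fun i => Obs.refuse (as i)) (fun j => Obs.act (bs j) Obs.top)) (fun _ : PUnit => φ)))

inductive IsRS {A : Type} : Obs A → Prop where
  | top : IsRS .top
  | act (a : A) {φ : Obs A} : IsRS φ → IsRS (.act a φ)
  | refuse (a : A) : IsRS (.refuse a)
  | conj {ι : Type} {φs : ι → Obs A} : (∀ i, IsRS (φs i)) → IsRS (.conj φs)

def Wedge {A : Type} (L : Obs A → Prop) : Obs A → Prop :=
  fun φ => ∃ (ι : Type) (φs : ι → Obs A), (∀ i, L (φs i)) ∧ φ = Obs.conj φs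

def ObsLe {P A : Type} (tr : P → A → P → Prop) (L : Obs A → Prop) (p q : P) : Prop :=
  ∀ φ : Obs A, L φ → Sat tr p φ → Sat tr q φ

def NestedSim {P A : Type} (tr : P → A → P → Prop) : ℕ → (P → P → Prop) → Prop
  | 0, _ => False
  | 1, R => Sim tr R
  | (n+2), R => Sim tr R ∧ ∃ S, NestedSim tr (n+1) S ∧ ∀ p q, R p q → S q p

lemma rt_initials {P A : Type} {tr : P → A → P → Prop} {p : P} {X : Set A}
    {l : List (A × Set A)} (h : ReadyTrace tr p X l) : X = initials tr p := by
  cases h <;> rfl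

lemma rt_cons_inv {P A : Type} {tr : P → A → P → Prop} {r : P} {X Y : Set A}
    {a : A} {rest : List (A × Set A)} (h : ReadyTrace tr r X ((a, Y) :: rest)) :
    ∃ r', tr r a r' ∧ ReadyTrace tr r' Y rest := by
  cases h with
  | cons hs hrt => exact ⟨_, hs, hrt⟩

lemma rt_extract {P A : Type} (tr : P → A → P → Prop) :
    ∀ φ : Obs A, IsRT φ → ∀ p : P, Sat tr p φ →
      ∃ X l, ReadyTrace tr p X l ∧ ∀ r, ReadyTrace tr r X l → Sat tr r φ := by
  intro φ hφ
  induction hφ with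
  | top =>
      intro p _
      exact ⟨initials tr p, [], ReadyTrace.nil p, fun r _ => trivial⟩
  | act a hφ' ih =>
      intro p hp
      obtain ⟨p', hstep, hp'⟩ := hp
      obtain ⟨X', l', hrt, hall⟩ := ih p' hp'
      refine ⟨initials tr p, (a, X') :: l', ReadyTrace.cons hstep hrt, ?_⟩
      intro r hr
      obtain ⟨r', hs, hrt'⟩ := rt_cons_inv hr
      exact ⟨r', hs, hall _ hrt'⟩
  | @conj I J as bs φ' hφ' ih =>
      intro p hp
      have hp' : Sat tr p φ' := hp (Sum.inr PUnit.unit)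
      obtain ⟨X', l', hrt, hall⟩ := ih p hp'
      have hX : X' = initials tr p := rt_initials hrt
      refine ⟨X', l', hrt, ?_⟩
      intro r hr
      have hXr : X' = initials tr r := rt_initials hr
      intro i
      match i with
      | Sum.inr _ => exact hall r hr
      | Sum.inl (Sum.inl i) =>
          intro q hq
          have : as i ∈ initials tr p := hX ▸ hXr ▸ ⟨q, hq⟩
          obtain ⟨q', hq'⟩ := this
          exact hp (Sum.inl (Sum.inl i)) q' hq'
      | Sum.inl (Sum.inr j) =>
          have : bs j ∈ initials tr p := by
            obtain ⟨q', hq', _⟩ := hp (Sum.inl (Sum.inr j))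
            exact ⟨q', hq'⟩
          obtain ⟨q', hq'⟩ := hXr ▸ hX ▸ this
          exact ⟨q', hq', trivial⟩

def charForm {A : Type} (X : Set A) : List (A × Set A) → Obs A
  | [] => Obs.conj (Sum.elim
      (Sum.elim (fun i : {a : A // a ∉ X} => Obs.refuse i.val)
                (fun j : {a : A // a ∈ X} => Obs.act j.val Obs.top))
      (fun _ : PUnit => Obs.top))
  | (a, Y) :: rest => Obs.conj (Sum.elim
      (Sum.elim (fun i : {a : A // a ∉ X} => Obs.refuse i.val)
                (fun j : {a : A // a ∈ X} => Obs.act j.val Obs.top))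
      (fun _ : PUnit => Obs.act a (charForm Y rest)))

lemma charForm_isRT {A : Type} (X : Set A) (l : List (A × Set A)) :
    IsRT (charForm X l) := by
  induction l generalizing X with
  | nil => exact IsRT.conj _ _ IsRT.top
  | cons hd tl ih =>
      obtain ⟨a, Y⟩ := hd
      exact IsRT.conj _ _ (IsRT.act a (ih Y))

lemma sat_charForm {P A : Type} (tr : P → A → P → Prop) :
    ∀ (l : List (A × Set A)) (X : Set A) (p : P),
      Sat tr p (charForm X l) ↔ ReadyTrace tr p X l := by
  intro l
  induction l with
  | nil =>
      intro X p
      constructor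
      · intro h
        have hX : X = initials tr p := by
          apply Set.eq_of_subset_of_subset
          · intro b hb
            obtain ⟨q, hq, _⟩ := h (Sum.inl (Sum.inr ⟨b, hb⟩))
            exact ⟨q, hq⟩
          · intro b hb
            by_contra hnb
            obtain ⟨q, hq⟩ := hb
            exact h (Sum.inl (Sum.inl ⟨b, hnb⟩)) q hq
        exact hX ▸ ReadyTrace.nil p
      · intro h
        have hX := rt_initials h
        intro i
        match i with
        | Sum.inr _ => trivial
        | Sum.inl (Sum.inl ⟨b, hb⟩) =>
            intro q hq
            exact hb (hX ▸ (⟨q, hq⟩ : b ∈ initials tr p))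
        | Sum.inl (Sum.inr ⟨b, hb⟩) =>
            obtain ⟨q, hq⟩ := hX ▸ hb
            exact ⟨q, hq, trivial⟩
  | cons hd tl ih =>
      obtain ⟨a, Y⟩ := hd
      intro X p
      constructor
      · intro h
        have hX : X = initials tr p := by
          apply Set.eq_of_subset_of_subset
          · intro b hb
            obtain ⟨q, hq, _⟩ := h (Sum.inl (Sum.inr ⟨b, hb⟩))
            exact ⟨q, hq⟩
          · intro b hb
            by_contra hnb
            obtain ⟨q, hq⟩ := hb
            exact h (Sum.inl (Sum.inl ⟨b, hnb⟩)) q hq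
        obtain ⟨p', hstep, hp'⟩ := h (Sum.inr PUnit.unit)
        exact hX ▸ ReadyTrace.cons hstep ((ih Y p').mp hp')
      · intro h
        have hX := rt_initials h
        cases h with
        | cons hstep hrt =>
            intro i
            match i with
            | Sum.inr _ => exact ⟨_, hstep, (ih Y _).mpr hrt⟩
            | Sum.inl (Sum.inl ⟨b, hb⟩) =>
                intro q hq
                exact hb (⟨q, hq⟩ : b ∈ initials tr p)
            | Sum.inl (Sum.inr ⟨b, hb⟩) =>
                obtain ⟨q, hq⟩ := hb
                exact ⟨q, hq, trivial⟩

/-- modal characterization of the ready trace preorder. -/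
theorem ready_trace_modal_characterization
    (P A : Type) (tr : P → A → P → Prop) (p q : P) :
    (∀ (X : Set A) (l : List (A × Set A)), ReadyTrace tr p X l → ReadyTrace tr q X l) ↔
      (∀ φ : Obs A, IsRT φ → Sat tr p φ → Sat tr q φ) := by
  constructor
  · intro hinc φ hφ hp
    obtain ⟨X, l, hrt, hall⟩ := rt_extract tr φ hφ p hp
    exact hall q (hinc X l hrt)
  · intro hobs X l hrt
    exact (sat_charForm tr l X q).mp
      (hobs _ (charForm_isRT X l) ((sat_charForm tr l X p).mpr hrt))
end

section
/- For any LTS and processes p, q: the set of failure pairs of p is included in that of q if and only if every failure observation satisfied by p is satisfied by q. -/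
lemma steps_nil_iff {P A : Type} (tr : P → A → P → Prop) (r t : P) :
    Steps tr r [] t ↔ t = r := by
  constructor
  · intro h; cases h; rfl
  · rintro rfl; exact .nil _

lemma steps_cons_iff {P A : Type} (tr : P → A → P → Prop) (r t : P) (a : A) (l : List A) :
    Steps tr r (a :: l) t ↔ ∃ s, tr r a s ∧ Steps tr s l t := by
  constructor
  · intro h; cases h with
    | cons h1 h2 => exact ⟨_, h1, h2⟩
  · rintro ⟨s, h1, h2⟩; exact .cons h1 h2

lemma isF_to_pair {P A : Type} (tr : P → A → P → Prop) (φ : Obs A) (hF : IsF φ) :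
    ∃ (ς : List A) (X : Set A), ∀ r : P, Sat tr r φ ↔ FailurePair tr r ς X := by
  induction hF with
  | top =>
    refine ⟨[], ∅, fun r => ?_⟩
    simp only [Sat, FailurePair, steps_nil_iff]
    constructor
    · intro _; exact ⟨r, rfl, Set.inter_empty _⟩
    · intro _; trivial
  | act a hφ ih =>
    obtain ⟨ς, X, hX⟩ := ih
    refine ⟨a :: ς, X, fun r => ?_⟩
    simp only [Sat, FailurePair, steps_cons_iff]
    constructor
    · rintro ⟨s, hs, hsat⟩
      obtain ⟨t, ht, hi⟩ := (hX s).1 hsat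
      exact ⟨t, ⟨s, hs, ht⟩, hi⟩
    · rintro ⟨t, ⟨s, hs, ht⟩, hi⟩
      exact ⟨s, hs, (hX s).2 ⟨t, ht, hi⟩⟩
  | conj as =>
    refine ⟨[], Set.range as, fun r => ?_⟩
    simp only [Sat, FailurePair, steps_nil_iff]
    constructor
    · intro h
      refine ⟨r, rfl, ?_⟩
      ext x
      simp only [Set.mem_inter_iff, Set.mem_empty_iff_false, iff_false]
      rintro ⟨hx, i, rfl⟩
      obtain ⟨s, hs⟩ := hx
      exact h i s hs
    · rintro ⟨t, rfl, hi⟩ i s hs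
      have : as i ∈ initials tr t ∩ Set.range as := ⟨⟨s, hs⟩, ⟨i, rfl⟩⟩
      rw [hi] at this
      exact this

lemma pair_to_isF {P A : Type} (tr : P → A → P → Prop) (ς : List A) (X : Set A) :
    ∃ φ : Obs A, IsF φ ∧ ∀ r : P, Sat tr r φ ↔ FailurePair tr r ς X := by
  induction ς with
  | nil =>
    refine ⟨Obs.conj (fun i : X => Obs.refuse i.val), IsF.conj _, fun r => ?_⟩
    simp only [Sat, FailurePair, steps_nil_iff]
    constructor
    · intro h
      refine ⟨r, rfl, ?_⟩
      ext x
      simp only [Set.mem_inter_iff, Set.mem_empty_iff_false, iff_false]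
      rintro ⟨⟨s, hs⟩, hx⟩
      exact h ⟨x, hx⟩ s hs
    · rintro ⟨t, rfl, hi⟩ i s hs
      have : i.val ∈ initials tr t ∩ X := ⟨⟨s, hs⟩, i.2⟩
      rw [hi] at this
      exact this
  | cons a l ih =>
    obtain ⟨φ, hF, hφ⟩ := ih
    refine ⟨Obs.act a φ, IsF.act a hF, fun r => ?_⟩
    simp only [Sat, FailurePair, steps_cons_iff]
    constructor
    · rintro ⟨s, hs, hsat⟩
      obtain ⟨t, ht, hi⟩ := (hφ s).1 hsat
      exact ⟨t, ⟨s, hs, ht⟩, hi⟩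
    · rintro ⟨t, ⟨s, hs, ht⟩, hi⟩
      exact ⟨s, hs, (hφ s).2 ⟨t, ht, hi⟩⟩

/-- modal characterization of the failure preorder. -/
theorem failure_modal_characterization
    (P A : Type) (tr : P → A → P → Prop) (p q : P) :
    (∀ (ς : List A) (X : Set A), FailurePair tr p ς X → FailurePair tr q ς X) ↔
      (∀ φ : Obs A, IsF φ → Sat tr p φ → Sat tr q φ) := by
  constructor
  · intro h φ hF hp
    obtain ⟨ς, X, hφ⟩ := isF_to_pair tr φ hF
    exact (hφ q).2 (h ς X ((hφ p).1 hp))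
  · intro h ς X hp
    obtain ⟨φ, hF, hφ⟩ := pair_to_isF tr ς X
    exact (hφ q).1 (h φ hF ((hφ p).2 hp))
end

section
/- For every notion N among partial traces, completed traces, ready pairs, failure pairs, ready traces, failure traces, and for all processes p, q in an LTS: O_N(p) ⊆ O_N(q) if and only if O_N^∧(p) ⊆ O_N^∧(q), where O_N^∧ extends O_N by closing under arbitrary conjunctions at the top level. -/
theorem obsLe_wedge_general {P A : Type} (tr : P → A → P → Prop) (L : Obs A → Prop)
    (p q : P) : ObsLe tr L p q ↔ ObsLe tr (Wedge L) p q := by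
  constructor
  · intro h φ hφ hp
    obtain ⟨ι, φs, hL, rfl⟩ := hφ
    intro i
    exact h _ (hL i) (hp i)
  · intro h φ hφ hp
    have := h (Obs.conj (fun _ : PUnit => φ)) ⟨PUnit, _, fun _ => hφ, rfl⟩ (fun _ => hp)
    exact this PUnit.unit

/-- for each of the six decorated trace notions N, inclusion of
N-observations coincides with inclusion of conjunctions of N-observations. -/
theorem obs_le_iff_wedge_obs_le
    (P A : Type) (tr : P → A → P → Prop) (p q : P) :
    (ObsLe tr IsT p q ↔ ObsLe tr (Wedge IsT) p q) ∧
    (ObsLe tr IsCT p q ↔ ObsLe tr (Wedge IsCT) p q) ∧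
    (ObsLe tr IsR p q ↔ ObsLe tr (Wedge IsR) p q) ∧
    (ObsLe tr IsF p q ↔ ObsLe tr (Wedge IsF) p q) ∧
    (ObsLe tr IsRT p q ↔ ObsLe tr (Wedge IsRT) p q) ∧
    (ObsLe tr IsFT p q ↔ ObsLe tr (Wedge IsFT) p q) := by
  exact ⟨obsLe_wedge_general tr _ p q, obsLe_wedge_general tr _ p q,
    obsLe_wedge_general tr _ p q, obsLe_wedge_general tr _ p q,
    obsLe_wedge_general tr _ p q, obsLe_wedge_general tr _ p q⟩
end

section
/- Every ntytt rule irredundantly provable from a TSS in decent ntytt format is itself decent: the variables in the left-hand sides of its premises occur in its source, and (for a positive conclusion) the variables of its target occur in the source or as right-hand sides of positive premises. -/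
inductive Tm (F : Type) (ar : F → ℕ) (V : Type) : Type where
  | var : V → Tm F ar V
  | app : (f : F) → (Fin (ar f) → Tm F ar V) → Tm F ar V

variable {F V A : Type} {ar : F → ℕ}

def varsTm : Tm F ar V → Set V
  | .var x => {x}
  | .app _ ts => ⋃ i, varsTm (ts i)

def symsTm : Tm F ar V → Set F
  | .var _ => ∅
  | .app f ts => {f} ∪ ⋃ i, symsTm (ts i)

def ClosedTm (t : Tm F ar V) : Prop := varsTm t = ∅

def subTm (σ : V → Tm F ar V) : Tm F ar V → Tm F ar V
  | .var x => σ x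
  | .app f ts => .app f (fun i => subTm σ (ts i))

inductive Lit (F : Type) (ar : F → ℕ) (V A : Type) : Type where
  | pos : Tm F ar V → A → Tm F ar V → Lit F ar V A
  | neg : Tm F ar V → A → Lit F ar V A

def Lit.lhs : Lit F ar V A → Tm F ar V
  | .pos t _ _ => t
  | .neg t _ => t

def Lit.isNeg : Lit F ar V A → Prop
  | .pos _ _ _ => False
  | .neg _ _ => True

def ClosedLit : Lit F ar V A → Prop
  | .pos t _ t' => ClosedTm t ∧ ClosedTm t'
  | .neg t _ => ClosedTm t

def varsLit : Lit F ar V A → Set V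
  | .pos t _ t' => varsTm t ∪ varsTm t'
  | .neg t _ => varsTm t

def symsLit : Lit F ar V A → Set F
  | .pos t _ t' => symsTm t ∪ symsTm t'
  | .neg t _ => symsTm t

def Denies : Lit F ar V A → Lit F ar V A → Prop
  | .pos t a _, .neg u b => t = u ∧ a = b
  | .neg t a, .pos u b _ => t = u ∧ a = b
  | .pos _ _ _, .pos _ _ _ => False
  | .neg _ _, .neg _ _ => False

def subLit (σ : V → Tm F ar V) : Lit F ar V A → Lit F ar V A
  | .pos t a t' => .pos (subTm σ t) a (subTm σ t')
  | .neg t a => .neg (subTm σ t) a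

structure Rule (F : Type) (ar : F → ℕ) (V A : Type) : Type where
  prem : Set (Lit F ar V A)
  concl : Lit F ar V A

def Rule.source (r : Rule F ar V A) : Tm F ar V := r.concl.lhs

def Rule.vars (r : Rule F ar V A) : Set V := varsLit r.concl ∪ ⋃ l ∈ r.prem, varsLit l

def Rule.syms (r : Rule F ar V A) : Set F := symsLit r.concl ∪ ⋃ l ∈ r.prem, symsLit l

def subRule (σ : V → Tm F ar V) (r : Rule F ar V A) : Rule F ar V A :=
  ⟨subLit σ '' r.prem, subLit σ r.concl⟩

/-- the right-hand side variables of the positive literals in `H` -/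
def rhsVars (H : Set (Lit F ar V A)) : Set V := {y | ∃ t a, Lit.pos t a (.var y) ∈ H}

/-- the variables occurring in left-hand sides of literals in `H` -/
def lhsVars (H : Set (Lit F ar V A)) : Set V := ⋃ l ∈ H, varsTm l.lhs

structure IsNtytt (r : Rule F ar V A) : Prop where
  rhs_var : ∀ {t : Tm F ar V} {a : A} {t' : Tm F ar V},
    Lit.pos t a t' ∈ r.prem → ∃ y : V, t' = Tm.var y
  rhs_distinct : ∀ {t u : Tm F ar V} {a b : A} {y : V},
    Lit.pos t a (.var y) ∈ r.prem → Lit.pos u b (.var y) ∈ r.prem → t = u ∧ a = b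
  rhs_fresh : ∀ {t : Tm F ar V} {a : A} {y : V},
    Lit.pos t a (.var y) ∈ r.prem → y ∉ varsTm r.source

def NoLookahead (r : Rule F ar V A) : Prop :=
  ∀ y ∈ rhsVars r.prem, y ∉ lhsVars r.prem

def NoFreeVars (r : Rule F ar V A) : Prop :=
  ∀ x ∈ r.vars, x ∈ varsTm r.source ∨ x ∈ rhsVars r.prem

def Decent (r : Rule F ar V A) : Prop := NoLookahead r ∧ NoFreeVars r

/-- the source is of the form `f(x₁,…,x_{ar f})` with distinct variables -/
def NtyftSource (r : Rule F ar V A) : Prop :=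
  ∃ (f : F) (xs : Fin (ar f) → V), Function.Injective xs ∧
    r.source = Tm.app f (fun i => Tm.var (xs i))

/-- decent xynft rule: decent ntyft rule whose positive premises have variables as
left-hand sides -/
def DecentXynft (r : Rule F ar V A) : Prop :=
  IsNtytt r ∧ Decent r ∧ NtyftSource r ∧
    ∀ {t : Tm F ar V} {a : A} {t' : Tm F ar V},
      Lit.pos t a t' ∈ r.prem → ∃ x : V, t = Tm.var x

/-- `Proves R H α` : the transition rule `H/α` is provable from the TSS `R`,
i.e. there is a well-founded proof tree with root `α` whose hypotheses are included in `H`. -/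
inductive Proves (R : Set (Rule F ar V A)) : Set (Lit F ar V A) → Lit F ar V A → Prop where
  | hyp {H : Set (Lit F ar V A)} {α : Lit F ar V A} : α ∈ H → Proves R H α
  | step {H : Set (Lit F ar V A)} (r : Rule F ar V A) (σ : V → Tm F ar V) :
      r ∈ R → (∀ β ∈ r.prem, Proves R H (subLit σ β)) → Proves R H (subLit σ r.concl)

/-- `IProves R H α` : the transition rule `H/α` is irredundantly provable from `R`:
there is a proof tree with root `α` whose set of hypotheses is exactly `H`. -/
inductive IProves (R : Set (Rule F ar V A)) : Set (Lit F ar V A) → Lit F ar V A → Prop where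
  | hyp (α : Lit F ar V A) : IProves R {α} α
  | step (r : Rule F ar V A) (σ : V → Tm F ar V) (K : Lit F ar V A → Set (Lit F ar V A)) :
      r ∈ R → (∀ β ∈ r.prem, IProves R (K β) (subLit σ β)) →
      IProves R (⋃ β ∈ r.prem, K β) (subLit σ r.concl)

/-- Well-supported provability of a closed literal. -/
inductive WS (R : Set (Rule F ar V A)) : Lit F ar V A → Prop where
  | step (r : Rule F ar V A) (σ : V → Tm F ar V) :
      r ∈ R → (∀ x, ClosedTm (σ x)) →
      (∀ β ∈ r.prem, WS R (subLit σ β)) → WS R (subLit σ r.concl)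
  | neg (t : Tm F ar V) (a : A)
      (δ : Set (Lit F ar V A) → Tm F ar V → Lit F ar V A) :
      ClosedTm t →
      (∀ (N : Set (Lit F ar V A)) (t' : Tm F ar V),
        (∀ β ∈ N, β.isNeg ∧ ClosedLit β) → ClosedTm t' →
        Proves R N (.pos t a t') →
        WS R (δ N t')) →
      (∀ (N : Set (Lit F ar V A)) (t' : Tm F ar V),
        (∀ β ∈ N, β.isNeg ∧ ClosedLit β) → ClosedTm t' →
        Proves R N (.pos t a t') →
        ∃ β ∈ N, Denies (δ N t') β) →
      WS R (.neg t a)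

lemma varsSubTm (σ : V → Tm F ar V) (t : Tm F ar V) :
    varsTm (subTm σ t) = ⋃ x ∈ varsTm t, varsTm (σ x) := by
  induction t with
  | var x => simp [subTm, varsTm]
  | app f ts ih =>
    simp only [subTm, varsTm, ih]
    ext y
    simp only [Set.mem_iUnion]
    tauto

lemma subLit_lhs (σ : V → Tm F ar V) (l : Lit F ar V A) :
    (subLit σ l).lhs = subTm σ l.lhs := by
  cases l <;> rfl

lemma varsLhs_subset_varsLit (l : Lit F ar V A) : varsTm l.lhs ⊆ varsLit l := by
  cases l with
  | pos t a t' => exact Set.subset_union_left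
  | neg t a => exact subset_rfl

lemma lhs_subset_source {r : Rule F ar V A} (h : Decent r) {β : Lit F ar V A}
    (hβ : β ∈ r.prem) : varsTm β.lhs ⊆ varsTm r.source := by
  intro x hx
  have hv : x ∈ r.vars :=
    Or.inr (Set.mem_biUnion hβ (varsLhs_subset_varsLit β hx))
  rcases h.2 x hv with hs | hrhs
  · exact hs
  · exact absurd (Set.mem_biUnion hβ hx) (h.1 x hrhs)

/-- every ntytt rule irredundantly provable from a TSS in decent ntytt
format is decent: the variables in the left-hand sides of its premises occur in its
source, and for a positive conclusion the variables of its target occur in the source or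
as right-hand sides of positive premises. -/
theorem decency_preserved_under_irredundant_provability (F V A : Type) (ar : F → ℕ)
    (R : Set (Rule F ar V A)) (hR : ∀ r ∈ R, IsNtytt r ∧ Decent r)
    (H : Set (Lit F ar V A)) (α : Lit F ar V A)
    (hnt : IsNtytt ⟨H, α⟩) (hpf : IProves R H α) :
    lhsVars H ⊆ varsTm α.lhs ∧
      ∀ (t : Tm F ar V) (a : A) (t' : Tm F ar V),
        α = .pos t a t' → varsTm t' ⊆ varsTm t ∪ rhsVars H := by
  revert hnt
  induction hpf with
  | hyp α =>
    intro hnt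
    constructor
    · intro x hx
      simp only [lhsVars, Set.mem_iUnion, Set.mem_singleton_iff] at hx
      obtain ⟨l, rfl, hx⟩ := hx
      exact hx
    · rintro t a t' rfl
      obtain ⟨y, rfl⟩ := hnt.rhs_var (Set.mem_singleton _)
      intro x hx
      simp only [varsTm, Set.mem_singleton_iff] at hx
      subst hx
      exact Or.inr ⟨t, a, rfl⟩
  | step r σ K hr hprem ih =>
    intro hnt
    have hrd := hR r hr
    have hKsub : ∀ β ∈ r.prem, K β ⊆ ⋃ β ∈ r.prem, K β :=
      fun β hβ => Set.subset_biUnion_of_mem hβ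
    have hsub : ∀ β ∈ r.prem, varsTm (subTm σ β.lhs) ⊆ varsTm (subTm σ r.source) := by
      intro β hβ x hx
      rw [varsSubTm] at hx ⊢
      simp only [Set.mem_iUnion] at hx ⊢
      obtain ⟨y, hy, hx⟩ := hx
      exact ⟨y, lhs_subset_source hrd.2 hβ hy, hx⟩
    have hnt' : ∀ β ∈ r.prem, IsNtytt ⟨K β, subLit σ β⟩ := by
      intro β hβ
      constructor
      · intro t a t' ht; exact hnt.rhs_var (hKsub β hβ ht)
      · intro t u a b y h1 h2
        exact hnt.rhs_distinct (hKsub β hβ h1) (hKsub β hβ h2)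
      · intro t a y h
        have hf := hnt.rhs_fresh (hKsub β hβ h)
        intro hy
        apply hf
        show y ∈ varsTm (subLit σ r.concl).lhs
        rw [subLit_lhs]
        have : y ∈ varsTm (subTm σ β.lhs) := by
          rw [← subLit_lhs]; exact hy
        exact hsub β hβ this
    constructor
    · intro x hx
      simp only [lhsVars, Set.mem_iUnion, exists_prop] at hx
      obtain ⟨l, ⟨β, hβ, hl⟩, hx⟩ := hx
      have hx' : x ∈ lhsVars (K β) := Set.mem_biUnion hl hx
      have := (ih β hβ (hnt' β hβ)).1 hx'
      rw [subLit_lhs] at this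
      show x ∈ varsTm (subLit σ r.concl).lhs
      rw [subLit_lhs]
      exact hsub β hβ this
    · intro t a t' heq
      cases hc : r.concl with
      | neg u b => rw [hc] at heq; simp [subLit] at heq
      | pos u b u' =>
        rw [hc] at heq
        simp only [subLit, Lit.pos.injEq] at heq
        obtain ⟨ht, hab, ht'⟩ := heq
        subst ht; subst hab; subst ht'
        intro x hx
        rw [varsSubTm] at hx
        simp only [Set.mem_iUnion] at hx
        obtain ⟨z, hz, hx⟩ := hx
        have hzv : z ∈ r.vars := by
          left; rw [hc]; exact Or.inr hz
        have hsrc : r.source = u := by rw [Rule.source, hc]; rfl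
        rcases hrd.2.2 z hzv with hs | hrhs
        · left
          rw [varsSubTm]
          simp only [Set.mem_iUnion]
          exact ⟨z, by rwa [hsrc] at hs, hx⟩
        · obtain ⟨p, c, hβ⟩ := hrhs
          have hsl : subLit σ (Lit.pos p c (Tm.var z)) = Lit.pos (subTm σ p) c (σ z) := by
            simp [subLit, subTm]
          have hih := (ih _ hβ (hnt' _ hβ)).2 (subTm σ p) c (σ z) hsl
          rcases hih hx with hp | hr
          · left
            have : x ∈ varsTm (subTm σ r.source) :=
              hsub _ hβ (by simpa [Lit.lhs] using hp)
            rwa [hsrc] at this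
          · right
            obtain ⟨q, c', hq⟩ := hr
            exact ⟨q, c', hKsub _ hβ hq⟩
end

section
/- Let P and P' be standard TSSs over the same signature such that P ⊢ N/(t →a t') iff P' ⊢ N/(t →a t') for every closed transition rule N/(t →a t') whose premises N are all negative. Then for every closed literal α, α has a well-supported proof from P iff it has one from P'. -/
variable {F V A : Type} {ar : F → ℕ}

theorem subTm_comp (τ σ : V → Tm F ar V) (t : Tm F ar V) :
    subTm τ (subTm σ t) = subTm (fun x => subTm τ (σ x)) t := by
  induction t with
  | var x => rfl
  | app f ts ih => simp only [subTm]; exact congrArg _ (funext ih)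

theorem subLit_comp (τ σ : V → Tm F ar V) (l : Lit F ar V A) :
    subLit τ (subLit σ l) = subLit (fun x => subTm τ (σ x)) l := by
  cases l <;> simp [subLit, subTm_comp]

theorem subTm_of_closed {τ : V → Tm F ar V} {t : Tm F ar V} (h : ClosedTm t) :
    subTm τ t = t := by
  induction t with
  | var x =>
    exact absurd h (by simp [ClosedTm, varsTm])
  | app f ts ih =>
    have h' : ∀ i, ClosedTm (ts i) := by
      intro i
      have := (Set.iUnion_eq_empty.mp h) i
      exact this
    simp only [subTm]
    exact congrArg _ (funext fun i => ih i (h' i))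

theorem subLit_of_closed {τ : V → Tm F ar V} {l : Lit F ar V A} (h : ClosedLit l) :
    subLit τ l = l := by
  cases l with
  | pos t a t' => simp [subLit, subTm_of_closed h.1, subTm_of_closed h.2]
  | neg t a => simp [subLit, subTm_of_closed h]

theorem closedTm_sub {τ : V → Tm F ar V} (hτ : ∀ x, ClosedTm (τ x)) (t : Tm F ar V) :
    ClosedTm (subTm τ t) := by
  induction t with
  | var x => exact hτ x
  | app f ts ih =>
    show varsTm (Tm.app f fun i => subTm τ (ts i)) = ∅
    simp only [varsTm]
    exact Set.iUnion_eq_empty.mpr ih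

theorem closedLit_sub {τ : V → Tm F ar V} (hτ : ∀ x, ClosedTm (τ x)) (l : Lit F ar V A) :
    ClosedLit (subLit τ l) := by
  cases l with
  | pos t a t' => exact ⟨closedTm_sub hτ t, closedTm_sub hτ t'⟩
  | neg t a => exact closedTm_sub hτ t

theorem proves_mono {R : Set (Rule F ar V A)} {H H' : Set (Lit F ar V A)} (hs : H ⊆ H')
    {γ : Lit F ar V A} (hp : Proves R H γ) : Proves R H' γ := by
  induction hp with
  | hyp hm => exact .hyp (hs hm)
  | step r σ hr _ ih => exact .step r σ hr ih

/-- From a proof with closed, well-supportedly provable hypotheses, get a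
well-supported proof of any closed instance of the conclusion. -/
theorem ws_of_proves {R : Set (Rule F ar V A)} {N : Set (Lit F ar V A)}
    (hN : ∀ β ∈ N, Lit.isNeg β ∧ ClosedLit β) (hWS : ∀ β ∈ N, WS R β)
    {γ : Lit F ar V A} (hp : Proves R N γ)
    (τ : V → Tm F ar V) (hτ : ∀ x, ClosedTm (τ x)) :
    WS R (subLit τ γ) := by
  induction hp with
  | hyp hm => rw [subLit_of_closed (hN _ hm).2]; exact hWS _ hm
  | step r σ hr hprem ih =>
    rw [subLit_comp]
    exact WS.step r _ hr (fun x => closedTm_sub hτ (σ x))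
      (fun β hβ => by rw [← subLit_comp]; exact ih β hβ)

theorem ws_mono {R R' : Set (Rule F ar V A)}
    (hstd : ∀ r ∈ R, ¬ Lit.isNeg r.concl)
    (h : ∀ (N : Set (Lit F ar V A)) (t t' : Tm F ar V) (a : A),
      (∀ β ∈ N, Lit.isNeg β ∧ ClosedLit β) → ClosedTm t → ClosedTm t' →
      (Proves R N (.pos t a t') ↔ Proves R' N (.pos t a t')))
    {α : Lit F ar V A} (hα : WS R α) :
    WS R' α ∧ ∃ N : Set (Lit F ar V A),
      (∀ β ∈ N, Lit.isNeg β ∧ ClosedLit β) ∧ (∀ β ∈ N, WS R' β) ∧ Proves R N α := by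
  induction hα with
  | step r σ hr hσ hprem ih =>
    classical
    -- pick, for each premise, a hypothesis set from the IH
    have spec : ∀ β (hβ : β ∈ r.prem), ∃ Nb : Set (Lit F ar V A),
        (∀ γ ∈ Nb, Lit.isNeg γ ∧ ClosedLit γ) ∧ (∀ γ ∈ Nb, WS R' γ) ∧
        Proves R Nb (subLit σ β) := fun β hβ => (ih β hβ).2
    set Nf : (β : Lit F ar V A) → Set (Lit F ar V A) := fun β =>
      if hβ : β ∈ r.prem then (spec β hβ).choose else ∅ with hNf
    have Nfspec : ∀ β (hβ : β ∈ r.prem),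
        (∀ γ ∈ Nf β, Lit.isNeg γ ∧ ClosedLit γ) ∧ (∀ γ ∈ Nf β, WS R' γ) ∧
        Proves R (Nf β) (subLit σ β) := by
      intro β hβ
      simp only [hNf, dif_pos hβ]
      exact (spec β hβ).choose_spec
    set N : Set (Lit F ar V A) := ⋃ β ∈ r.prem, Nf β with hNdef
    have hNmem : ∀ γ ∈ N, ∃ β, ∃ hβ : β ∈ r.prem, γ ∈ Nf β := by
      intro γ hγ
      rcases Set.mem_iUnion₂.mp hγ with ⟨β, hβ, hγ⟩
      exact ⟨β, hβ, hγ⟩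
    have hNnc : ∀ γ ∈ N, Lit.isNeg γ ∧ ClosedLit γ := by
      intro γ hγ; rcases hNmem γ hγ with ⟨β, hβ, hγ⟩
      exact (Nfspec β hβ).1 γ hγ
    have hNws : ∀ γ ∈ N, WS R' γ := by
      intro γ hγ; rcases hNmem γ hγ with ⟨β, hβ, hγ⟩
      exact (Nfspec β hβ).2.1 γ hγ
    have hNproves : Proves R N (subLit σ r.concl) := by
      refine Proves.step r σ hr (fun β hβ => ?_)
      exact proves_mono (Set.subset_biUnion_of_mem hβ) (Nfspec β hβ).2.2
    -- the conclusion is positive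
    obtain ⟨t, a, t', hc⟩ : ∃ t a t', r.concl = Lit.pos t a t' := by
      cases hc : r.concl with
      | pos t a t' => exact ⟨t, a, t', rfl⟩
      | neg t a => exact absurd (by rw [hc]; trivial) (hstd r hr)
    have hclosed : ClosedLit (subLit σ r.concl) := closedLit_sub hσ _
    have hclosed' : ClosedTm (subTm σ t) ∧ ClosedTm (subTm σ t') := by
      rw [hc] at hclosed; exact hclosed
    have hRp : Proves R N (Lit.pos (subTm σ t) a (subTm σ t')) := by
      rw [hc] at hNproves; exact hNproves
    have hR'p : Proves R' N (Lit.pos (subTm σ t) a (subTm σ t')) :=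
      (h N _ _ a hNnc hclosed'.1 hclosed'.2).mp hRp
    have hws' : WS R' (subLit σ r.concl) := by
      have := ws_of_proves hNnc hNws hR'p (fun _ => subTm σ t)
        (fun _ => hclosed'.1)
      rw [subLit_of_closed (l := Lit.pos (subTm σ t) a (subTm σ t')) hclosed'] at this
      rw [hc]
      exact this
    exact ⟨hws', N, hNnc, hNws, hNproves⟩
  | neg t a δ hc hδ hdenies ih =>
    have hws' : WS R' (.neg t a) := by
      refine WS.neg t a δ hc (fun N t' hN ht' hp => ?_) (fun N t' hN ht' hp => ?_)
      · exact (ih N t' hN ht' ((h N t t' a hN hc ht').mpr hp)).1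
      · exact hdenies N t' hN ht' ((h N t t' a hN hc ht').mpr hp)
    exact ⟨hws', {Lit.neg t a}, by rintro β rfl; exact ⟨trivial, hc⟩,
      by rintro β rfl; exact hws', Proves.hyp rfl⟩

/-- if two standard TSSs prove the same closed transition rules with only
negative premises, then they admit well-supported proofs of the same closed literals. -/
theorem ws_provability_from_negative_rule_provability (F V A : Type) (ar : F → ℕ)
    (R R' : Set (Rule F ar V A))
    (hstd : ∀ r ∈ R, ¬ r.concl.isNeg) (hstd' : ∀ r ∈ R', ¬ r.concl.isNeg)
    (h : ∀ (N : Set (Lit F ar V A)) (t t' : Tm F ar V) (a : A),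
      (∀ β ∈ N, β.isNeg ∧ ClosedLit β) → ClosedTm t → ClosedTm t' →
      (Proves R N (.pos t a t') ↔ Proves R' N (.pos t a t'))) :
    ∀ α : Lit F ar V A, ClosedLit α → (WS R α ↔ WS R' α) := by
  intro α _
  constructor
  · exact fun hα => (ws_mono hstd h hα).1
  · exact fun hα => (ws_mono hstd'
      (fun N t t' a hN ht ht' => (h N t t' a hN ht ht').symm) hα).1
end

section
/- Let P₁ = (Σ₁, R₁) and P₂ = (Σ₂, R₂) be TSSs with Σ₁ ⊆ Σ₂ and R₁ ⊆ R₂, such that every rule in R₁ is decent and every rule in R₂ − R₁ has a function symbol from Σ₂ − Σ₁ in its source. Then for every transition rule H/α over Σ₂ whose source is a term over Σ₁: P₂ irredundantly proves H/α iff P₁ irredundantly proves H/α. -/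
variable {F V A : Type} {ar : F → ℕ}

lemma symsTm_le_subTm (σ : V → Tm F ar V) (t : Tm F ar V) :
    symsTm t ⊆ symsTm (subTm σ t) := by
  induction t with
  | var x => simp [symsTm]
  | app f ts ih =>
    simp only [symsTm, subTm]
    intro g hg
    rcases hg with hg | hg
    · exact Or.inl hg
    · right
      simp only [Set.mem_iUnion] at hg ⊢
      obtain ⟨i, hi⟩ := hg
      exact ⟨i, ih i hi⟩

lemma symsTm_sigma_le (σ : V → Tm F ar V) {t : Tm F ar V} {x : V}
    (hx : x ∈ varsTm t) : symsTm (σ x) ⊆ symsTm (subTm σ t) := by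
  induction t with
  | var y =>
    simp only [varsTm, Set.mem_singleton_iff] at hx
    subst hx; exact le_refl _
  | app f ts ih =>
    simp only [varsTm, Set.mem_iUnion] at hx
    obtain ⟨i, hi⟩ := hx
    intro g hg
    simp only [subTm, symsTm, Set.mem_union, Set.mem_iUnion]
    exact Or.inr ⟨i, ih i hi hg⟩

lemma symsLit_mem_syms {r : Rule F ar V A} {β : Lit F ar V A} (hβ : β ∈ r.prem) :
    symsLit β ⊆ r.syms := by
  intro g hg
  exact Or.inr (Set.mem_biUnion hβ hg)

lemma symsTm_lhs_le (β : Lit F ar V A) : symsTm β.lhs ⊆ symsLit β := by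
  cases β with
  | pos t a t' => exact Set.subset_union_left
  | neg t a => exact le_refl _

lemma varsTm_lhs_le_varsLit (β : Lit F ar V A) : varsTm β.lhs ⊆ varsLit β := by
  cases β with
  | pos t a t' => exact Set.subset_union_left
  | neg t a => exact le_refl _

lemma iproves_mono {R₁ R₂ : Set (Rule F ar V A)} (hsub : R₁ ⊆ R₂)
    {H : Set (Lit F ar V A)} {α : Lit F ar V A} (h : IProves R₁ H α) :
    IProves R₂ H α := by
  induction h with
  | hyp α => exact IProves.hyp α
  | step r σ K hr hprem ih => exact IProves.step r σ K (hsub hr) ih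

/-- conservativity of irredundant provability. If `R₁ ⊆ R₂`, all rules of
`R₁` are decent rules over the subsignature `F₁` and every rule of `R₂ − R₁` has a
function symbol outside `F₁` in its source, then the two TSSs irredundantly prove the
same rules whose source is a term over `F₁`. -/
theorem iproves_conservative (F V A : Type) (ar : F → ℕ) (F₁ : Set F)
    (R₁ R₂ : Set (Rule F ar V A))
    (hsub : R₁ ⊆ R₂)
    (h₁syms : ∀ r ∈ R₁, Rule.syms r ⊆ F₁)
    (h₁dec : ∀ r ∈ R₁, Decent r)
    (h₂ : ∀ r ∈ R₂, r ∉ R₁ → ∃ f ∈ symsTm r.source, f ∉ F₁) :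
    ∀ (H : Set (Lit F ar V A)) (α : Lit F ar V A), symsTm α.lhs ⊆ F₁ →
      (IProves R₂ H α ↔ IProves R₁ H α) := by
  intro H α hα
  constructor
  · intro h
    induction h with
    | hyp α => exact IProves.hyp α
    | step r σ K hr hprem ih =>
      have hsy := hα
      rw [subLit_lhs] at hsy
      -- the rule must be in R₁
      have hr1 : r ∈ R₁ := by
        by_contra hn
        obtain ⟨f, hf, hfn⟩ := h₂ r hr hn
        exact hfn (hsy (symsTm_le_subTm σ r.source hf))
      have hdec := h₁dec r hr1
      have hsyms := h₁syms r hr1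
      refine IProves.step r σ K hr1 ?_
      intro β hβ
      refine ih β hβ ?_
      rw [subLit_lhs]
      -- symbols of subTm σ β.lhs are in F₁
      intro g hg
      -- split: symbols of β.lhs itself, or symbols of σ x for x ∈ vars β.lhs
      have key : symsTm (subTm σ β.lhs) ⊆ F₁ := by
        have hvars : ∀ x ∈ varsTm β.lhs, x ∈ varsTm r.source := by
          intro x hx
          have hlhs : x ∈ lhsVars r.prem := Set.mem_biUnion hβ hx
          have hxv : x ∈ r.vars :=
            Or.inr (Set.mem_biUnion hβ (varsTm_lhs_le_varsLit β hx))
          rcases hdec.2 x hxv with h | h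
          · exact h
          · exact absurd hlhs (hdec.1 x h)
        clear hg g
        have hsrc : symsTm β.lhs ⊆ F₁ :=
          fun g hg => hsyms (symsLit_mem_syms hβ (symsTm_lhs_le β hg))
        -- induction on β.lhs
        generalize β.lhs = t at hvars hsrc ⊢
        induction t with
        | var x =>
          exact fun g hg => hsy (symsTm_sigma_le σ (hvars x rfl) hg)
        | app f ts ihts =>
          intro g hg
          simp only [subTm, symsTm, Set.mem_union, Set.mem_iUnion] at hg
          rcases hg with hg | ⟨i, hg⟩
          · exact hsrc (Or.inl hg)
          · refine ihts i ?_ ?_ hg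
            · intro x hx
              exact hvars x (Set.mem_iUnion.mpr ⟨i, hx⟩)
            · intro g' hg'
              exact hsrc (Or.inr (Set.mem_iUnion.mpr ⟨i, hg'⟩))
      exact key hg
  · exact iproves_mono hsub
end

section
/- In any LTS, a process p satisfies a failure trace observation of the form ⋀_{i∈I} ãᵢ ∧ φ' iff p refuses every aᵢ and p satisfies φ'; consequently, if the set of failure traces of p is included in that of q then every failure trace observation satisfied by p is satisfied by q, and conversely. -/
section Aux
variable {P A : Type} {tr : P → A → P → Prop}

lemma sat_conj_elim (I : Type) (as : I → A) (φ' : Obs A) (r : P) :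
    Sat tr r (Obs.conj (Sum.elim (fun i => Obs.refuse (as i)) (fun _ : PUnit => φ'))) ↔
      ((∀ i, ∀ s, ¬ tr r (as i) s) ∧ Sat tr r φ') := by
  constructor
  · intro h
    exact ⟨fun i => h (Sum.inl i), h (Sum.inr PUnit.unit)⟩
  · rintro ⟨h1, h2⟩ (i | j)
    · exact h1 i
    · exact h2

lemma refuse_iff (r : P) (X : Set A) :
    initials tr r ∩ X = ∅ ↔ ∀ a ∈ X, ∀ s, ¬ tr r a s := by
  rw [Set.eq_empty_iff_forall_notMem]
  constructor
  · intro h a ha s hs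
    exact h a ⟨⟨s, hs⟩, ha⟩
  · rintro h a ⟨⟨s, hs⟩, ha⟩
    exact h a ha s hs

lemma ft_split (r : P) (X : Set A) (l : List (A × Set A)) :
    FailureTrace tr r X l ↔ (initials tr r ∩ X = ∅ ∧ FailureTrace tr r ∅ l) := by
  constructor
  · intro h
    cases h with
    | nil h => exact ⟨h, .nil (Set.inter_empty _)⟩
    | cons h1 h2 h3 => exact ⟨h1, .cons (Set.inter_empty _) h2 h3⟩
  · rintro ⟨h1, h2⟩
    cases h2 with
    | nil => exact .nil h1
    | cons _ h2 h3 => exact .cons h1 h2 h3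

lemma isFT_sat_iff (φ : Obs A) (h : IsFT φ) :
    ∃ (X : Set A) (l : List (A × Set A)), ∀ r : P, Sat tr r φ ↔ FailureTrace tr r X l := by
  induction h with
  | top =>
    refine ⟨∅, [], fun r => ?_⟩
    simp only [Sat]
    exact iff_of_true trivial (.nil (Set.inter_empty _))
  | act a hφ ih =>
    obtain ⟨X, l, hiff⟩ := ih
    refine ⟨∅, (a, X) :: l, fun r => ?_⟩
    constructor
    · rintro ⟨s, h1, h2⟩
      exact .cons (Set.inter_empty _) h1 ((hiff s).1 h2)
    · intro h
      cases h with
      | cons h1 h2 h3 => exact ⟨_, h2, (hiff _).2 h3⟩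
  | @conj I as φ hφ ih =>
    obtain ⟨X, l, hiff⟩ := ih
    refine ⟨X ∪ Set.range as, l, fun r => ?_⟩
    rw [sat_conj_elim, ft_split, Set.inter_union_distrib_left, Set.union_empty_iff,
      hiff r, ft_split]
    constructor
    · rintro ⟨h1, h2, h3⟩
      refine ⟨⟨h2, ?_⟩, h3⟩
      rw [refuse_iff]
      rintro a ⟨i, rfl⟩ s hs
      exact h1 i s hs
    · rintro ⟨⟨h2, h1⟩, h3⟩
      refine ⟨fun i s hs => ?_, h2, h3⟩
      exact (refuse_iff r _).1 h1 (as i) ⟨i, rfl⟩ s hs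

def ofFT (X : Set A) : List (A × Set A) → Obs A
  | [] => .conj (Sum.elim (fun i : X => Obs.refuse i.1) (fun _ : PUnit => Obs.top))
  | (a, Y) :: l => .conj (Sum.elim (fun i : X => Obs.refuse i.1)
      (fun _ : PUnit => Obs.act a (ofFT Y l)))

lemma isFT_ofFT (X : Set A) (l : List (A × Set A)) : IsFT (ofFT X l) := by
  induction l generalizing X with
  | nil => exact IsFT.conj (fun i : X => i.1) IsFT.top
  | cons hd tl ih =>
    obtain ⟨a, Y⟩ := hd
    exact IsFT.conj (fun i : X => i.1) (IsFT.act a (ih Y))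

lemma sat_ofFT (X : Set A) (l : List (A × Set A)) (r : P) :
    Sat tr r (ofFT X l) ↔ FailureTrace tr r X l := by
  induction l generalizing X r with
  | nil =>
    show Sat tr r (Obs.conj _) ↔ _
    rw [sat_conj_elim]
    simp only [Sat, and_true]
    constructor
    · intro h
      refine .nil ((refuse_iff r X).2 fun a ha s hs => h ⟨a, ha⟩ s hs)
    · intro h
      cases h with
      | nil h => exact fun i s hs => (refuse_iff r X).1 h i.1 i.2 s hs
  | cons hd tl ih =>
    obtain ⟨a, Y⟩ := hd
    show Sat tr r (Obs.conj _) ↔ _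
    rw [sat_conj_elim]
    constructor
    · rintro ⟨h1, s, h2, h3⟩
      exact .cons ((refuse_iff r X).2 fun b hb => h1 ⟨b, hb⟩) h2 ((ih Y s).1 h3)
    · intro h
      cases h with
      | cons h1 h2 h3 =>
        exact ⟨fun i s hs => (refuse_iff r X).1 h1 i.1 i.2 s hs, _, h2, (ih Y _).2 h3⟩

end Aux

/-- satisfaction of a failure trace observation `⋀_{i} ãᵢ ∧ φ'` amounts to
refusing every `aᵢ` and satisfying `φ'`; and the failure trace preorder coincides with
inclusion of failure trace observations. -/


theorem failure_trace_modal_characterization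
    (P A : Type) (tr : P → A → P → Prop) (p q : P) :
    (∀ (I : Type) (as : I → A) (φ' : Obs A) (r : P),
      Sat tr r (Obs.conj (Sum.elim (fun i => Obs.refuse (as i)) (fun _ : PUnit => φ'))) ↔
        ((∀ i, ∀ s, ¬ tr r (as i) s) ∧ Sat tr r φ')) ∧
    ((∀ (X : Set A) (l : List (A × Set A)), FailureTrace tr p X l → FailureTrace tr q X l) ↔
      (∀ φ : Obs A, IsFT φ → Sat tr p φ → Sat tr q φ)) := by
  constructor
  · intro I as φ' r
    exact sat_conj_elim I as φ' r
  · constructor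
    · intro hincl φ hφ hsat
      obtain ⟨X, l, hiff⟩ := isFT_sat_iff (tr := tr) φ hφ
      exact (hiff q).2 (hincl X l ((hiff p).1 hsat))
    · intro hobs X l hft
      exact (sat_ofFT X l q).1 (hobs (ofFT X l) (isFT_ofFT X l) ((sat_ofFT X l p).2 hft))
end
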